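/- With the Hopf-Lax solution u(x,t) = inf_{y ≤ x}{u0(y) + (x-y)²/(4t)} and minimizer sets I(x;s,t) as above, suppose 0 ≤ t₁ < t₂ < t₃, y₂ ∈ I(x; t₂, t₃), and y₁ ∈ I(y₂; t₁, t₂). Then y₁ ∈ I(x; t₁, t₃) and (x - y₁)/(t₃ - t₁) = (x - y₂)/(t₃ - t₂) = (y₂ - y₁)/(t₂ - t₁); i.e., the points (y₁, t₁), (y₂, t₂), (x, t₃) are collinear. -/
import Mathlib


open Set Filter MeasureTheory
open scoped NNReal ENNReal

/-- Hopf–Lax formula with flux f(ρ)=ρ², conjugate g(x)=x²/4: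
`u(x,t) = inf_{y ≤ x} { u0(y) + (x-y)²/(4t) }`, with `u(x,0)=u0(x)`. -/
noncomputable def hopfLax (u0 : ℝ → ℝ) (x t : ℝ) : ℝ :=
  if t = 0 then u0 x
  else sInf ((fun y => u0 y + (x - y) ^ 2 / (4 * t)) '' Iic x)

/-- Minimizer set `I(x;s,t)` in the semigroup Hopf–Lax formula.
For `s = 0` this is the set `I(x,t)` of Hopf–Lax minimizers. -/
noncomputable def minSet (u0 : ℝ → ℝ) (x s t : ℝ) : Set ℝ :=
  {y | y ≤ x ∧ hopfLax u0 x t = hopfLax u0 y s + (x - y) ^ 2 / (4 * (t - s))}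

/-- Minimal Hopf–Lax minimizer `y⁻(x;s,t)`. -/
noncomputable def yminus (u0 : ℝ → ℝ) (x s t : ℝ) : ℝ := sInf (minSet u0 x s t)

/-- Maximal Hopf–Lax minimizer `y⁺(x;s,t)`. -/
noncomputable def yplus (u0 : ℝ → ℝ) (x s t : ℝ) : ℝ := sSup (minSet u0 x s t)

/-- Minimal forward characteristic `w⁻(a;s,t) = inf{x : y±(x;s,t) ≥ a}`. -/
noncomputable def wminus (u0 : ℝ → ℝ) (a s t : ℝ) : ℝ :=
  sInf {x | a ≤ yminus u0 x s t}

/-- Maximal forward characteristic `w⁺(a;s,t) = sup{x : y±(x;s,t) ≤ a}`. -/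
noncomputable def wplus (u0 : ℝ → ℝ) (a s t : ℝ) : ℝ :=
  sSup {x | yplus u0 x s t ≤ a}

lemma hl_zero (u0 : ℝ → ℝ) (x : ℝ) : hopfLax u0 x 0 = u0 x := by
  simp [hopfLax]

lemma hl_pos (u0 : ℝ → ℝ) (x t : ℝ) (ht : t ≠ 0) :
    hopfLax u0 x t = sInf ((fun y => u0 y + (x - y) ^ 2 / (4 * t)) '' Iic x) := by
  simp [hopfLax, ht]

lemma convex_key (a b p q : ℝ) (ha : 0 < a) (hb : 0 < b) :
    p ^ 2 / (4 * a) + q ^ 2 / (4 * b) - (p + q) ^ 2 / (4 * (a + b))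
      = (p * b - q * a) ^ 2 / (4 * a * b * (a + b)) := by
  field_simp
  ring

lemma convex_ineq (a b p q : ℝ) (ha : 0 < a) (hb : 0 < b) :
    (p + q) ^ 2 / (4 * (a + b)) ≤ p ^ 2 / (4 * a) + q ^ 2 / (4 * b) := by
  have h := convex_key a b p q ha hb
  have h2 : (0:ℝ) ≤ (p * b - q * a) ^ 2 / (4 * a * b * (a + b)) := by positivity
  linarith

lemma convex_eq (a b p q : ℝ) (ha : 0 < a) (hb : 0 < b)
    (h : p ^ 2 / (4 * a) + q ^ 2 / (4 * b) ≤ (p + q) ^ 2 / (4 * (a + b))) :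
    p * b = q * a := by
  have hk := convex_key a b p q ha hb
  have h0 : (p * b - q * a) ^ 2 / (4 * a * b * (a + b)) ≤ 0 := by linarith
  have hpos : (0:ℝ) < 4 * a * b * (a + b) := by positivity
  have hle : (p * b - q * a) ^ 2 ≤ 0 := by
    by_contra hc
    push_neg at hc
    exact absurd (div_pos hc hpos) (not_lt.2 h0)
  have h3 := le_antisymm hle (sq_nonneg _)
  have := pow_eq_zero_iff (n := 2) (by norm_num) |>.1 h3
  linarith

lemma hl_bdd (u0 : ℝ → ℝ) (hmono : Monotone u0)
    (hgrowth : Tendsto (fun y => u0 y / y ^ 2) atBot (nhds 0))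
    (x t : ℝ) (ht : 0 < t) :
    BddBelow ((fun y => u0 y + (x - y) ^ 2 / (4 * t)) '' Iic x) := by
  have hε : (0:ℝ) < 1 / (8 * t) := by positivity
  have hev : ∀ᶠ z in atBot, |u0 z / z ^ 2| < 1 / (8 * t) := by
    have := hgrowth.eventually (Metric.ball_mem_nhds (0:ℝ) hε)
    filter_upwards [this] with z hz
    simpa [Real.dist_eq, abs_div] using hz
  obtain ⟨M, hM⟩ := eventually_atBot.1 hev
  set M' : ℝ := min M (min x (-1)) with hM'
  have hM'le : M' ≤ M := min_le_left _ _
  have hM'x : M' ≤ x := le_trans (min_le_right _ _) (min_le_left _ _)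
  have hM'neg : M' < 0 := lt_of_le_of_lt (le_trans (min_le_right _ _) (min_le_right _ _)) (by norm_num)
  refine ⟨min (u0 M') (-(x ^ 2) / (4 * t)), ?_⟩
  rintro v ⟨z, hz, rfl⟩
  simp only [mem_Iic] at hz
  rcases le_or_gt z M' with hzM | hzM
  · have hz0 : z < 0 := lt_of_le_of_lt hzM hM'neg
    have hz2 : (0:ℝ) < z ^ 2 := by nlinarith
    have habs : |u0 z| / z ^ 2 < 1 / (8 * t) := by
      have := hM z (le_trans hzM hM'le)
      rwa [abs_div, abs_of_pos hz2] at this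
    have habs' : |u0 z| < z ^ 2 * (1 / (8 * t)) := by
      rwa [div_lt_iff₀ hz2, mul_comm] at habs
    have hlow : -(z ^ 2 * (1 / (8 * t))) ≤ u0 z := by
      have := neg_abs_le (u0 z)
      linarith
    refine le_trans (min_le_right _ _) ?_
    have hq : -(x ^ 2) / (4 * t) ≤ -(z ^ 2 * (1 / (8 * t))) + (x - z) ^ 2 / (4 * t) := by
      have ht8 : (0:ℝ) < 8 * t := by positivity
      have ht4 : (0:ℝ) < 4 * t := by positivity
      rw [div_le_iff₀ ht4, add_mul, div_mul_cancel₀ _ ht4.ne']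
      have : -(z ^ 2 * (1 / (8 * t))) * (4 * t) = -(z ^ 2) / 2 := by
        field_simp; ring
      rw [this]
      nlinarith [sq_nonneg (z - 2 * x)]
    simp only
    linarith
  · refine le_trans (min_le_left _ _) ?_
    have hm := hmono hzM.le
    have hnn : (0:ℝ) ≤ (x - z) ^ 2 / (4 * t) := by positivity
    simp only
    linarith

lemma hl_subadd (u0 : ℝ → ℝ) (hmono : Monotone u0)
    (hgrowth : Tendsto (fun y => u0 y / y ^ 2) atBot (nhds 0))
    (x y s t : ℝ) (hyx : y ≤ x) (hs : 0 ≤ s) (hst : s < t) :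
    hopfLax u0 x t ≤ hopfLax u0 y s + (x - y) ^ 2 / (4 * (t - s)) := by
  have ht : (0:ℝ) < t := lt_of_le_of_lt hs hst
  have hbddx := hl_bdd u0 hmono hgrowth x t ht
  rw [hl_pos u0 x t ht.ne']
  rcases eq_or_lt_of_le hs with hs0 | hs0
  · subst hs0
    rw [hl_zero]
    have hmem : u0 y + (x - y) ^ 2 / (4 * t) ∈
        ((fun z => u0 z + (x - z) ^ 2 / (4 * t)) '' Iic x) := ⟨y, hyx, rfl⟩
    have h := csInf_le hbddx hmem
    simpa using h
  · rw [hl_pos u0 y s hs0.ne', ← sub_le_iff_le_add]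
    have hne : ((fun z => u0 z + (y - z) ^ 2 / (4 * s)) '' Iic y).Nonempty :=
      (nonempty_Iic).image _
    refine le_csInf hne ?_
    rintro b ⟨z, hz, rfl⟩
    simp only [mem_Iic] at hz
    rw [sub_le_iff_le_add]
    have hmem : u0 z + (x - z) ^ 2 / (4 * t) ∈
        ((fun w => u0 w + (x - w) ^ 2 / (4 * t)) '' Iic x) := ⟨z, le_trans hz hyx, rfl⟩
    refine le_trans (csInf_le hbddx hmem) ?_
    have hci := convex_ineq s (t - s) (y - z) (x - y) hs0 (by linarith)
    have h1 : y - z + (x - y) = x - z := by ring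
    have h2 : s + (t - s) = t := by ring
    rw [h1, h2] at hci
    simp only
    linarith

/-- If y₂ ∈ I(x;t₂,t₃) and y₁ ∈ I(y₂;t₁,t₂) with 0 ≤ t₁ < t₂ < t₃,
then y₁ ∈ I(x;t₁,t₃) and the points (y₁,t₁), (y₂,t₂), (x,t₃) are collinear. -/
theorem minimizers_collinear
    (u0 : ℝ → ℝ) (hmono : Monotone u0)
    (hlc : ∀ y : ℝ, ContinuousWithinAt u0 (Iic y) y)
    (hgrowth : Tendsto (fun y => u0 y / y ^ 2) atBot (nhds 0))
    (t₁ t₂ t₃ x y₁ y₂ : ℝ) (h1 : 0 ≤ t₁) (h12 : t₁ < t₂) (h23 : t₂ < t₃)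
    (hy2 : y₂ ∈ minSet u0 x t₂ t₃) (hy1 : y₁ ∈ minSet u0 y₂ t₁ t₂) :
    y₁ ∈ minSet u0 x t₁ t₃ ∧
    (x - y₁) / (t₃ - t₁) = (x - y₂) / (t₃ - t₂) ∧
    (x - y₂) / (t₃ - t₂) = (y₂ - y₁) / (t₂ - t₁) := by
  obtain ⟨hy2x, he2⟩ := hy2
  obtain ⟨hy1y2, he1⟩ := hy1
  have ha : (0:ℝ) < t₂ - t₁ := by linarith
  have hb : (0:ℝ) < t₃ - t₂ := by linarith
  have hxy1 : y₁ ≤ x := le_trans hy1y2 hy2x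
  have hsub := hl_subadd u0 hmono hgrowth x y₁ t₁ t₃ hxy1 h1 (lt_trans h12 h23)
  have e : y₂ - y₁ + (x - y₂) = x - y₁ := by ring
  have e2 : t₂ - t₁ + (t₃ - t₂) = t₃ - t₁ := by ring
  have hge := convex_ineq (t₂ - t₁) (t₃ - t₂) (y₂ - y₁) (x - y₂) ha hb
  rw [e, e2] at hge
  have hcomb : (y₂ - y₁) ^ 2 / (4 * (t₂ - t₁)) + (x - y₂) ^ 2 / (4 * (t₃ - t₂))
      ≤ (x - y₁) ^ 2 / (4 * (t₃ - t₁)) := by linarith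
  have heq : (y₂ - y₁) * (t₃ - t₂) = (x - y₂) * (t₂ - t₁) := by
    have h := convex_eq (t₂ - t₁) (t₃ - t₂) (y₂ - y₁) (x - y₂) ha hb (by rw [e, e2]; exact hcomb)
    linarith
  refine ⟨⟨hxy1, by linarith⟩, ?_, ?_⟩
  · rw [div_eq_div_iff (by linarith : (t₃ - t₁) ≠ 0) hb.ne']
    linear_combination heq
  · rw [div_eq_div_iff hb.ne' ha.ne']
    linear_combination heq.symm
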